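/- For r = 1 (p = 2), the module H_*(D₂(Ω²P^{2n+1}(2)); Z/2) with basis u² (deg 4n−4), uv, Q₁u (deg 4n−3), v², λ(u,v) (deg 4n−2), Q₁v (deg 4n−1) and operations Sq¹_*Q₁v = v² + λ(u,v), Sq²_*Q₁v = Q₁u, Sq²_*v² = Sq¹_*uv = u², β^{(2)}λ(u,v) = Q₁u admits no nontrivial direct sum decomposition into submodules closed under the operations Sq¹_*, Sq²_* and β^{(2)}. -/
import Mathlib


/-- The mod `2` homology `H_*(D₂(Ω²P^{2n+1}(2)); ℤ/2)` (case `r = 1`), a 6-dimensional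
`ℤ/2`-vector space with basis `0 = Q₁v`, `1 = v²`, `2 = λ(u,v)`, `3 = uv`, `4 = Q₁u`,
`5 = u²`. -/
abbrev A15 : Type := Fin 6 → ZMod 2

/-- Basis vectors. -/
noncomputable def e15 (i : Fin 6) : A15 := Pi.single i 1

/-- Degrees: `|Q₁v| = 4n−1`, `|v²| = |λ(u,v)| = 4n−2`, `|uv| = |Q₁u| = 4n−3`,
`|u²| = 4n−4`. -/
def deg15 (n : ℕ) : Fin 6 → ℕ :=
  ![4 * n - 1, 4 * n - 2, 4 * n - 2, 4 * n - 3, 4 * n - 3, 4 * n - 4]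

/-- The linear operation determined by its values on the basis. -/
noncomputable def opOf15 (f : Fin 6 → A15) : A15 →ₗ[ZMod 2] A15 :=
  Matrix.mulVecLin (Matrix.of fun i j => f j i)

/-- `Sq¹_*`: `Q₁v ↦ v² + λ(u,v)`, `uv ↦ u²`, zero on the other listed generators. -/
noncomputable def Sq1' : A15 →ₗ[ZMod 2] A15 :=
  opOf15 (fun j => if j = 0 then e15 1 + e15 2 else if j = 3 then e15 5 else 0)

/-- `Sq²_*`: `Q₁v ↦ Q₁u`, `v² ↦ u²`, zero on the other listed generators. -/
noncomputable def Sq2' : A15 →ₗ[ZMod 2] A15 :=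
  opOf15 (fun j => if j = 0 then e15 4 else if j = 1 then e15 5 else 0)

/-- The secondary Bockstein `β^{(2)}`: `λ(u,v) ↦ Q₁u`, zero on the other listed
generators. -/
noncomputable def beta2' : A15 →ₗ[ZMod 2] A15 :=
  opOf15 (fun j => if j = 2 then e15 4 else 0)

/-- Projection onto the degree-`d` part: the submodule `M` is graded when it is stable
under all these projections. -/
noncomputable def proj15 (n d : ℕ) : A15 →ₗ[ZMod 2] A15 :=
  opOf15 (fun j => if deg15 n j = d then e15 j else 0)

/-- `M` is a graded submodule: it contains the homogeneous components of each of its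
elements. -/
def IsGraded15 (n : ℕ) (M : Submodule (ZMod 2) A15) : Prop :=
  ∀ x ∈ M, ∀ d : ℕ, proj15 n d x ∈ M
lemma opOf15_apply (f : Fin 6 → A15) (x : A15) (i : Fin 6) :
    opOf15 f x i = x 0 * f 0 i + x 1 * f 1 i + x 2 * f 2 i + x 3 * f 3 i + x 4 * f 4 i + x 5 * f 5 i := by
  simp [opOf15, Matrix.mulVecLin, Matrix.mulVec, dotProduct, Fin.sum_univ_six, mul_comm]

lemma Sq1_apply (x : A15) : Sq1' x = x 0 • (e15 1 + e15 2) + x 3 • e15 5 := by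
  funext i
  simp [Sq1', opOf15_apply, mul_add]
lemma Sq2_apply (x : A15) : Sq2' x = x 0 • e15 4 + x 1 • e15 5 := by
  funext i; simp [Sq2', opOf15_apply]

lemma beta2_apply (x : A15) : beta2' x = x 2 • e15 4 := by
  funext i; simp [beta2', opOf15_apply]

lemma e15_ne (i : Fin 6) : e15 i ≠ 0 := by
  intro h
  have := congrFun h i
  simp [e15] at this
lemma deg0 (n:ℕ) : deg15 n 0 = 4*n-1 := rfl
lemma deg1 (n:ℕ) : deg15 n 1 = 4*n-2 := rfl
lemma deg2 (n:ℕ) : deg15 n 2 = 4*n-2 := rfl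
lemma deg3 (n:ℕ) : deg15 n 3 = 4*n-3 := rfl
lemma deg4 (n:ℕ) : deg15 n 4 = 4*n-3 := rfl
lemma deg5 (n:ℕ) : deg15 n 5 = 4*n-4 := rfl

lemma proj_top (n : ℕ) (hn : 2 ≤ n) (x : A15) :
    proj15 n (4*n-1) x = x 0 • e15 0 := by
  have h1 : ¬ (4*n-2 = 4*n-1) := by omega
  have h2 : ¬ (4*n-3 = 4*n-1) := by omega
  have h3 : ¬ (4*n-4 = 4*n-1) := by omega
  funext i
  simp [proj15, opOf15_apply, deg0, deg1, deg2, deg3, deg4, deg5, h1, h2, h3]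

lemma proj_2 (n : ℕ) (hn : 2 ≤ n) (x : A15) :
    proj15 n (4*n-2) x = x 1 • e15 1 + x 2 • e15 2 := by
  have h1 : ¬ (4*n-1 = 4*n-2) := by omega
  have h2 : ¬ (4*n-3 = 4*n-2) := by omega
  have h3 : ¬ (4*n-4 = 4*n-2) := by omega
  funext i
  simp [proj15, opOf15_apply, deg0, deg1, deg2, deg3, deg4, deg5, h1, h2, h3]

lemma proj_3 (n : ℕ) (hn : 2 ≤ n) (x : A15) :
    proj15 n (4*n-3) x = x 3 • e15 3 + x 4 • e15 4 := by
  have h1 : ¬ (4*n-1 = 4*n-3) := by omega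
  have h2 : ¬ (4*n-2 = 4*n-3) := by omega
  have h3 : ¬ (4*n-4 = 4*n-3) := by omega
  funext i
  simp [proj15, opOf15_apply, deg0, deg1, deg2, deg3, deg4, deg5, h1, h2, h3]

lemma proj_4 (n : ℕ) (hn : 2 ≤ n) (x : A15) :
    proj15 n (4*n-4) x = x 5 • e15 5 := by
  have h1 : ¬ (4*n-1 = 4*n-4) := by omega
  have h2 : ¬ (4*n-2 = 4*n-4) := by omega
  have h3 : ¬ (4*n-3 = 4*n-4) := by omega
  funext i
  simp [proj15, opOf15_apply, deg0, deg1, deg2, deg3, deg4, deg5, h1, h2, h3]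

lemma sum_proj (x : A15) :
    x = x 0 • e15 0 + (x 1 • e15 1 + x 2 • e15 2) + (x 3 • e15 3 + x 4 • e15 4) + x 5 • e15 5 := by
  funext i
  fin_cases i <;> simp [e15]
lemma S1e0 : Sq1' (e15 0) = e15 1 + e15 2 := by rw [Sq1_apply]; simp [e15]
lemma S2e0 : Sq2' (e15 0) = e15 4 := by rw [Sq2_apply]; simp [e15]
lemma S2e1 : Sq2' (e15 1) = e15 5 := by rw [Sq2_apply]; simp [e15]
lemma S2e2 : Sq2' (e15 2) = 0 := by rw [Sq2_apply]; simp [e15]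
lemma b2e1 : beta2' (e15 1) = 0 := by rw [beta2_apply]; simp [e15]
lemma b2e2 : beta2' (e15 2) = e15 4 := by rw [beta2_apply]; simp [e15]
lemma S1e3 : Sq1' (e15 3) = e15 5 := by rw [Sq1_apply]; simp [e15]
lemma S1e4 : Sq1' (e15 4) = 0 := by rw [Sq1_apply]; simp [e15]
lemma S2e12 : Sq2' (e15 1 + e15 2) = e15 5 := by
  rw [map_add, S2e1, S2e2, add_zero]

lemma two_cases (a : ZMod 2) : a = 0 ∨ a = 1 := by
  fin_cases a
  · exact Or.inl rfl
  · exact Or.inr rfl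

lemma key15 (n : ℕ) (hn : 2 ≤ n) (M N : Submodule (ZMod 2) A15)
    (hdisj : ∀ v, v ∈ M → v ∈ N → v = 0)
    (hM : ∀ x ∈ M, Sq1' x ∈ M ∧ Sq2' x ∈ M ∧ beta2' x ∈ M)
    (hN : ∀ x ∈ N, Sq1' x ∈ N ∧ Sq2' x ∈ N ∧ beta2' x ∈ N)
    (hgN : IsGraded15 n N)
    (h0 : e15 0 ∈ M) : N = ⊥ := by
  have h12 : e15 1 + e15 2 ∈ M := by have := (hM _ h0).1; rwa [S1e0] at this
  have h4 : e15 4 ∈ M := by have := (hM _ h0).2.1; rwa [S2e0] at this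
  have h5 : e15 5 ∈ M := by have := (hM _ h12).2.1; rwa [S2e12] at this
  have step : ∀ (a : ZMod 2) (v : A15), v ≠ 0 → v ∈ M → a • v ∈ N → a = 0 := by
    intro a v hv0 hvM havN
    rcases two_cases a with h | h
    · exact h
    · rw [h, one_smul] at havN
      exact absurd (hdisj v hvM havN) hv0
  rw [eq_bot_iff]
  intro x hx
  simp only [Submodule.mem_bot]
  -- degree 4n-1 component
  have p1 := hgN x hx (4*n-1)
  rw [proj_top n hn] at p1
  have hx0 : x 0 = 0 := step _ _ (e15_ne 0) h0 p1
  -- degree 4n-2 component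
  have p2 := hgN x hx (4*n-2)
  rw [proj_2 n hn] at p2
  have hq2 := (hN _ p2).2.1
  rw [map_add, map_smul, map_smul, S2e1, S2e2, smul_zero, add_zero] at hq2
  have hx1 : x 1 = 0 := step _ _ (e15_ne 5) h5 hq2
  have hb2 := (hN _ p2).2.2
  rw [map_add, map_smul, map_smul, b2e1, b2e2, smul_zero, zero_add] at hb2
  have hx2 : x 2 = 0 := step _ _ (e15_ne 4) h4 hb2
  -- degree 4n-3 component
  have p3 := hgN x hx (4*n-3)
  rw [proj_3 n hn] at p3
  have hq3 := (hN _ p3).1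
  rw [map_add, map_smul, map_smul, S1e3, S1e4, smul_zero, add_zero] at hq3
  have hx3 : x 3 = 0 := step _ _ (e15_ne 5) h5 hq3
  rw [hx3, zero_smul, zero_add] at p3
  have hx4 : x 4 = 0 := step _ _ (e15_ne 4) h4 p3
  -- degree 4n-4 component
  have p4 := hgN x hx (4*n-4)
  rw [proj_4 n hn] at p4
  have hx5 : x 5 = 0 := step _ _ (e15_ne 5) h5 p4
  rw [sum_proj x, hx0, hx1, hx2, hx3, hx4, hx5]
  simp
/-- For `r = 1` (`p = 2`, `n ≥ 2`), the module
`H_*(D₂(Ω²P^{2n+1}(2)); ℤ/2)` with basis `u²` (deg `4n−4`), `uv, Q₁u` (deg `4n−3`),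
`v², λ(u,v)` (deg `4n−2`), `Q₁v` (deg `4n−1`) and operations
`Sq¹_*Q₁v = v² + λ(u,v)`, `Sq²_*Q₁v = Q₁u`, `Sq²_*v² = Sq¹_*uv = u²`,
`β^{(2)}λ(u,v) = Q₁u` admits no nontrivial direct sum decomposition into graded
submodules closed under `Sq¹_*`, `Sq²_*` and `β^{(2)}`: the only such decompositions
have one summand zero. -/
theorem stmt_15 (n : ℕ) (hn : 2 ≤ n) :
    ∀ M N : Submodule (ZMod 2) A15,
      IsCompl M N →
      (∀ x ∈ M, Sq1' x ∈ M ∧ Sq2' x ∈ M ∧ beta2' x ∈ M) →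
      (∀ x ∈ N, Sq1' x ∈ N ∧ Sq2' x ∈ N ∧ beta2' x ∈ N) →
      IsGraded15 n M → IsGraded15 n N →
      M = ⊥ ∨ N = ⊥ := by
  intro M N hc hM hN hgM hgN
  have hdisj : ∀ v : A15, v ∈ M → v ∈ N → v = 0 := by
    intro v hvM hvN
    have := hc.disjoint
    rw [Submodule.disjoint_def] at this
    exact this v hvM hvN
  have hdisj' : ∀ v : A15, v ∈ N → v ∈ M → v = 0 := fun v a b => hdisj v b a
  -- write e15 0 = m + n'
  have htop : (e15 0) ∈ M ⊔ N := by rw [hc.sup_eq_top]; trivial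
  rw [Submodule.mem_sup] at htop
  obtain ⟨m, hm, w, hw, hmw⟩ := htop
  have pm := hgM m hm (4*n-1)
  rw [proj_top n hn] at pm
  have pw := hgN w hw (4*n-1)
  rw [proj_top n hn] at pw
  have hsum : m 0 + w 0 = 1 := by
    have := congrFun hmw 0
    simpa [e15] using this
  rcases two_cases (m 0) with h | h
  · -- m 0 = 0, so w 0 = 1, e15 0 ∈ N
    rw [h, zero_add] at hsum
    rw [hsum, one_smul] at pw
    exact Or.inl (key15 n hn N M hdisj' hN hM hgM pw)
  · rw [h, one_smul] at pm
    exact Or.inr (key15 n hn M N hdisj hM hN hgN pm)
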